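/- Let β ∈ (0,1), l_k = 4^k, γ_k = exp(4^{βk}), ρ_k = 1 - 4^{-k} + iγ_k, and let f_C(v) = (1 - v^{-1})/log v - 2 ∑_{k≥1} (g(v^{1/l_k})/l_k) v^{-1/l_k} cos(γ_k log v) for v ≥ 1. Then there exists δ ∈ (0,1) such that for all v ≥ e⁴, (1-δ)(1-v^{-1})/log v ≤ f_C(v) ≤ (1+δ)(1-v^{-1})/log v. In particular f_C(v) > 0 for v > 1. -/

import Mathlib

/-!
Write `x_k = log v / 4^k`. Then `log v` times the `k`-th summand of the series in `fC` is
`psi x_k * cos (γ_k log v)` with `psi x = x e^{-x} g(e^x)`, so it suffices to bound `∑ psi x_k`.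
Since `χ^{*n}` is bounded by `1` and supported on `[e^n, e^{2n}]`, `g (e^x)` vanishes for `x < 1`,
is at most `1` on `[1, 4)`, at most `77/60` on `(2, 6)` and at most `2` everywhere. Hence
`psi ≤ 1/e < 0.37` on `[1, 4)`, `psi ≤ 1/10` on `[4, ∞)` and `psi ≤ e^{-x/2} ≤ 10^{-j}` on
`[4^j, 4^(j+1))` for `j ≥ 2`. The `x_k ≥ 1` lie in distinct such windows, so
`2 ∑ psi x_k ≤ 2 (0.37 + 1/9) < 0.99 (1 - e^{-4})`, which gives `δ = 0.99`.
For `v < e^4` every `x_k < 1`, the series vanishes and `fC β v = (1 - v⁻¹) / log v > 0`.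
-/

open Real

noncomputable def mconv (f h : ℝ → ℝ) : ℝ → ℝ := fun x => ∫ u in (1:ℝ)..x, f (x / u) * h u / u

noncomputable def chi : ℝ → ℝ := Set.indicator (Set.Icc (Real.exp 1) (Real.exp 2)) 1

/-- `chiPow n = χ^{*(n+1)}`. -/
noncomputable def chiPow : ℕ → (ℝ → ℝ)
  | 0 => chi
  | n + 1 => mconv (chiPow n) chi

noncomputable def g (u : ℝ) : ℝ := ∑' n : ℕ, chiPow n u / (n + 1)

noncomputable def γ (β : ℝ) (k : ℕ) : ℝ := Real.exp ((4:ℝ) ^ (β * k))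

noncomputable def fC (β : ℝ) (v : ℝ) : ℝ :=
  (1 - v⁻¹) / Real.log v -
    2 * ∑' k : ℕ, g (v ^ (((4:ℝ) ^ (k + 1))⁻¹)) / (4:ℝ) ^ (k + 1) *
      v ^ (-((4:ℝ) ^ (k + 1))⁻¹) * Real.cos (γ β (k + 1) * Real.log v)

open Set MeasureTheory

lemma chi_nonneg (u : ℝ) : 0 ≤ chi u :=
  indicator_nonneg (fun _ _ => zero_le_one) u

lemma chi_le_one (u : ℝ) : chi u ≤ 1 :=
  indicator_apply_le' (fun _ => le_rfl) (fun _ => zero_le_one)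

lemma chi_eq_zero_of_notMem {u : ℝ} (hu : u ∉ Icc (exp 1) (exp 2)) : chi u = 0 :=
  indicator_of_notMem hu 1

lemma chi_div_eq_indicator (s : ℝ) : chi s / s = (Icc (exp 1) (exp 2)).indicator (·⁻¹) s := by
  by_cases hs : s ∈ Icc (exp 1) (exp 2) <;> simp [chi, hs]

lemma integrable_indicator_inv_Icc_exp : Integrable ((Icc (exp 1) (exp 2)).indicator (·⁻¹)) := by
  refine (ContinuousOn.integrableOn_compact isCompact_Icc ?_).integrable_indicator measurableSet_Icc
  exact continuousOn_inv₀.mono fun s hs => (exp_pos 1).trans_le hs.1 |>.ne'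

lemma integral_chi_div_le_one {x : ℝ} (hx : 1 ≤ x) : ∫ s in (1:ℝ)..x, chi s / s ≤ 1 := by
  simp_rw [chi_div_eq_indicator]
  have htotal : ∫ s, (Icc (exp 1) (exp 2)).indicator (·⁻¹) s = 1 := by
    rw [integral_indicator measurableSet_Icc, integral_Icc_eq_integral_Ioc,
      ← intervalIntegral.integral_of_le (exp_le_exp.2 one_le_two), integral_inv
        (notMem_uIcc_of_lt (exp_pos 1) (exp_pos 2)), ← exp_sub]
    norm_num
  rw [intervalIntegral.integral_of_le hx]
  refine (setIntegral_le_integral integrable_indicator_inv_Icc_exp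
    (.of_forall (indicator_nonneg fun s hs => inv_nonneg.2 ((exp_pos 1).trans_le hs.1).le))).trans
    htotal.le

lemma mconv_eq_zero_of_ae {f h : ℝ → ℝ} {x : ℝ} (hfh : ∀ᵐ s, f (x / s) * h s = 0) :
    mconv f h x = 0 :=
  intervalIntegral.integral_zero_ae (hfh.mono fun s hs _ => by rw [hs, zero_div])

lemma mconv_nonneg {f h : ℝ → ℝ} {x : ℝ} (hf : ∀ y, 0 ≤ f y) (hh : ∀ y, 0 ≤ h y) (hx : 1 ≤ x) :
    0 ≤ mconv f h x :=
  intervalIntegral.integral_nonneg hx fun s hs =>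
    div_nonneg (mul_nonneg (hf _) (hh s)) (zero_le_one.trans hs.1)

lemma mconv_chi_le_one {f : ℝ → ℝ} {x : ℝ} (hf : ∀ y, f y ≤ 1) (hx : 1 ≤ x) : mconv f chi x ≤ 1 := by
  by_cases hint : IntervalIntegrable (fun s => f (x / s) * chi s / s) volume 1 x
  · refine le_trans ?_ (integral_chi_div_le_one hx)
    refine intervalIntegral.integral_mono_on hx hint ?_ fun s hs => ?_
    · simp_rw [chi_div_eq_indicator]
      exact integrable_indicator_inv_Icc_exp.intervalIntegrable
    · have hs₀ : 0 < s := zero_lt_one.trans_le hs.1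
      rw [mul_div_assoc]
      exact mul_le_of_le_one_left (div_nonneg (chi_nonneg s) hs₀.le) (hf _)
  · simp only [mconv, intervalIntegral.integral_undef hint, zero_le_one]

/-- If `f` vanishes below `e^a`, the integrand of `(f * χ)(x)` for `x ≤ e^(a+1)` can only be
nonzero at the single point `s = e`. -/
lemma mconv_chi_eq_zero_of_le {f : ℝ → ℝ} {a x : ℝ} (hf : ∀ y < exp a, f y = 0)
    (hx : x ≤ exp (a + 1)) : mconv f chi x = 0 := by
  refine mconv_eq_zero_of_ae (((countable_singleton (exp 1)).ae_notMem volume).mono fun s hs => ?_)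
  by_cases hchi : s ∈ Icc (exp 1) (exp 2)
  · have hs : exp 1 < s := lt_of_le_of_ne hchi.1 (Ne.symm hs)
    have hs₀ : 0 < s := (exp_pos 1).trans hs
    refine mul_eq_zero_of_left (hf _ ((div_lt_iff₀ hs₀).2 ?_)) _
    calc x ≤ exp a * exp 1 := by rwa [← exp_add]
      _ < exp a * s := by gcongr
  · rw [chi_eq_zero_of_notMem hchi, mul_zero]

lemma mconv_chi_eq_zero_of_gt {f : ℝ → ℝ} {b x : ℝ} (hf : ∀ y, exp b < y → f y = 0)
    (hx : exp (b + 2) < x) : mconv f chi x = 0 := by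
  refine mconv_eq_zero_of_ae (.of_forall fun s => ?_)
  by_cases hchi : s ∈ Icc (exp 1) (exp 2)
  · have hs₀ : 0 < s := (exp_pos 1).trans_le hchi.1
    refine mul_eq_zero_of_left (hf _ ((lt_div_iff₀ hs₀).2 ?_)) _
    calc exp b * s ≤ exp b * exp 2 := by gcongr; exact hchi.2
      _ < x := by rwa [← exp_add]
  · rw [chi_eq_zero_of_notMem hchi, mul_zero]

lemma chiPow_eq_zero_of_lt (n : ℕ) {u : ℝ} (hu : u < exp (n + 1)) : chiPow n u = 0 := by
  induction n generalizing u with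
  | zero =>
    rw [Nat.cast_zero, zero_add] at hu
    exact chi_eq_zero_of_notMem fun h => h.1.not_gt hu
  | succ n ih =>
    refine mconv_chi_eq_zero_of_le (a := n + 1) (fun y hy => ih hy) ?_
    push_cast at hu
    linarith

lemma chiPow_succ_eq_zero_of_le (n : ℕ) {u : ℝ} (hu : u ≤ exp (n + 2)) : chiPow (n + 1) u = 0 :=
  mconv_chi_eq_zero_of_le (a := n + 1) (fun _ hy => chiPow_eq_zero_of_lt n hy)
    (by rwa [add_assoc, one_add_one_eq_two])

lemma chiPow_eq_zero_of_gt (n : ℕ) {u : ℝ} (hu : exp (2 * n + 2) < u) : chiPow n u = 0 := by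
  induction n generalizing u with
  | zero =>
    rw [Nat.cast_zero, mul_zero, zero_add] at hu
    exact chi_eq_zero_of_notMem fun h => h.2.not_gt hu
  | succ n ih =>
    refine mconv_chi_eq_zero_of_gt (b := 2 * n + 2) (fun y hy => ih hy) ?_
    convert hu using 2
    push_cast
    ring

lemma chiPow_nonneg (n : ℕ) (u : ℝ) : 0 ≤ chiPow n u := by
  induction n generalizing u with
  | zero => exact chi_nonneg u
  | succ n ih =>
    rcases lt_or_ge u 1 with hu | hu
    · rw [chiPow_eq_zero_of_lt _ (hu.trans (one_lt_exp_iff.2 (by positivity)))]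
    · exact mconv_nonneg ih chi_nonneg hu

lemma chiPow_le_one (n : ℕ) (u : ℝ) : chiPow n u ≤ 1 := by
  induction n generalizing u with
  | zero => exact chi_le_one u
  | succ n ih =>
    rcases lt_or_ge u 1 with hu | hu
    · rw [chiPow_eq_zero_of_lt _ (hu.trans (one_lt_exp_iff.2 (by positivity)))]
      exact zero_le_one
    · exact mconv_chi_le_one ih hu

lemma g_nonneg (u : ℝ) : 0 ≤ g u :=
  tsum_nonneg fun n => div_nonneg (chiPow_nonneg n u) (by positivity)

lemma g_le_sum_inv {u : ℝ} (S : Finset ℕ) (hS : ∀ n ∉ S, chiPow n u = 0) :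
    g u ≤ ∑ n ∈ S, ((n : ℝ) + 1)⁻¹ := by
  rw [g, tsum_eq_sum fun n hn => by rw [hS n hn, zero_div]]
  exact Finset.sum_le_sum fun n _ => by
    rw [div_eq_mul_inv]
    exact mul_le_of_le_one_left (by positivity) (chiPow_le_one n u)

lemma chiPow_exp_eq_zero {n : ℕ} {x : ℝ} (h : x < n + 1 ∨ 2 * n + 2 < x) :
    chiPow n (exp x) = 0 :=
  h.elim (fun h => chiPow_eq_zero_of_lt n (exp_lt_exp.2 h))
    (fun h => chiPow_eq_zero_of_gt n (exp_lt_exp.2 h))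

lemma g_exp_eq_zero {x : ℝ} (hx : x < 1) : g (exp x) = 0 := by
  refine le_antisymm ?_ (g_nonneg _)
  simpa using g_le_sum_inv ∅ fun n _ => chiPow_exp_eq_zero <| .inl <|
    hx.trans_le (le_add_of_nonneg_left n.cast_nonneg)

lemma g_exp_le_one {x : ℝ} (hx : x < 4) : g (exp x) ≤ 1 := by
  rcases le_or_gt x 2 with h2 | h2
  · refine (g_le_sum_inv {0} fun n hn => ?_).trans (by norm_num)
    obtain ⟨m, rfl⟩ := Nat.exists_eq_succ_of_ne_zero (by simpa using hn)
    exact chiPow_succ_eq_zero_of_le m (exp_le_exp.2 (by linarith [m.cast_nonneg (α := ℝ)]))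
  · refine (g_le_sum_inv {1, 2} fun n hn => chiPow_exp_eq_zero ?_).trans (by norm_num)
    simp only [Finset.mem_insert, Finset.mem_singleton, not_or] at hn
    rcases Nat.lt_or_ge n 1 with hn' | hn'
    · exact .inr (by simp [Nat.lt_one_iff.1 hn', h2])
    · have : (3 : ℝ) ≤ n := by exact_mod_cast (by omega : 3 ≤ n)
      exact .inl (by linarith)

lemma g_exp_le_of_lt_six {x : ℝ} (h2 : 2 < x) (h6 : x < 6) : g (exp x) ≤ 77 / 60 := by
  refine (g_le_sum_inv {1, 2, 3, 4} fun n hn => chiPow_exp_eq_zero ?_).trans (by norm_num)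
  simp only [Finset.mem_insert, Finset.mem_singleton, not_or] at hn
  rcases Nat.lt_or_ge n 1 with hn' | hn'
  · exact .inr (by simp [Nat.lt_one_iff.1 hn', h2])
  · have : (5 : ℝ) ≤ n := by exact_mod_cast (by omega : 5 ≤ n)
    exact .inl (by linarith)

/-- Only the `n < x` with `x ≤ 2n + 2` contribute to `g (exp x)`, each at most `2 / x`. -/
lemma g_exp_le_two {x : ℝ} (hx : 0 < x) : g (exp x) ≤ 2 := by
  set S := (Finset.range ⌊x⌋₊).filter fun n : ℕ => x ≤ 2 * n + 2
  have hS : ∀ n ∉ S, chiPow n (exp x) = 0 := fun n hn => chiPow_exp_eq_zero <| by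
    simp only [S, Finset.mem_filter, Finset.mem_range, not_and_or, not_lt, not_le] at hn
    refine hn.imp (fun hn => (Nat.lt_floor_add_one x).trans_le ?_) id
    exact_mod_cast Nat.add_le_add_right hn 1
  calc g (exp x) ≤ ∑ n ∈ S, ((n : ℝ) + 1)⁻¹ := g_le_sum_inv S hS
    _ ≤ S.card • (2 / x) := Finset.sum_le_card_nsmul _ _ _ fun n hn => by
        rw [inv_le_comm₀ (by positivity) (by positivity), inv_div]
        linarith [(Finset.mem_filter.1 hn).2]
    _ ≤ x * (2 / x) := by
        rw [nsmul_eq_mul]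
        gcongr
        exact (Nat.cast_le.2 ((Finset.card_filter_le _ _).trans (Finset.card_range _).le)).trans
          (Nat.floor_le hx.le)
    _ = 2 := by field_simp

lemma pow_lt_exp_nat {n : ℕ} (hn : n ≠ 0) : (2.7182818283 : ℝ) ^ n < exp n := by
  rw [← exp_one_pow]
  exact pow_lt_pow_left₀ exp_one_gt_d9 (by norm_num) hn

lemma exp_neg_one_le : exp (-1) ≤ 0.37 := by
  rw [exp_neg, inv_le_comm₀ (exp_pos 1) (by norm_num)]
  linarith [exp_one_gt_d9]

lemma exp_four_gt : 54 < exp 4 := by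
  have := pow_lt_exp_nat (n := 4) (by norm_num)
  norm_num at this
  linarith

lemma exp_six_gt : 120 < exp 6 := by
  have := pow_lt_exp_nat (n := 6) (by norm_num)
  norm_num at this
  linarith

lemma mul_exp_neg_le_of_le {a x : ℝ} (ha : 1 ≤ a) (hx : a ≤ x) :
    x * exp (-x) ≤ a * exp (-a) := by
  have hexp : x ≤ a * exp (x - a) := by
    nlinarith [add_one_le_exp (x - a)]
  calc x * exp (-x) ≤ a * exp (x - a) * exp (-x) := by gcongr
    _ = a * exp (-a) := by rw [mul_assoc, ← exp_add]; ring_nf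

lemma two_mul_mul_exp_neg_le {x : ℝ} (hx : 16 ≤ x) : 2 * x * exp (-x) ≤ exp (-(x / 2)) := by
  have hcube : 2 * x ≤ exp (x / 2) := by
    have h : 1 + x / 6 ≤ exp (x / 6) := by linarith [add_one_le_exp (x / 6)]
    calc 2 * x ≤ (1 + x / 6) ^ 3 := by nlinarith [sq_nonneg x]
      _ ≤ exp (x / 6) ^ 3 := by gcongr
      _ = exp (x / 2) := by rw [← exp_nat_mul]; ring_nf
  calc 2 * x * exp (-x) ≤ exp (x / 2) * exp (-x) := by gcongr
    _ = exp (-(x / 2)) := by rw [← exp_add]; ring_nf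

lemma eight_mul_le_four_pow {j : ℕ} (hj : 2 ≤ j) : 8 * j ≤ 4 ^ j := by
  induction j, hj using Nat.le_induction with
  | base => norm_num
  | succ j hj ih => rw [pow_succ]; omega

noncomputable def psi (x : ℝ) : ℝ := x * exp (-x) * g (exp x)

lemma psi_eq_zero_of_lt_one {x : ℝ} (hx : x < 1) : psi x = 0 := by
  rw [psi, g_exp_eq_zero hx, mul_zero]

lemma psi_nonneg (x : ℝ) : 0 ≤ psi x := by
  rcases lt_or_ge x 1 with hx | hx
  · rw [psi_eq_zero_of_lt_one hx]
  · exact mul_nonneg (by positivity) (g_nonneg _)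

lemma psi_le_mul_exp_neg_mul {x c : ℝ} (hx : 0 ≤ x) (hg : g (exp x) ≤ c) :
    psi x ≤ x * exp (-x) * c :=
  mul_le_mul_of_nonneg_left hg (by positivity)

lemma psi_le_of_lt_four {x : ℝ} (h1 : 1 ≤ x) (h4 : x < 4) : psi x ≤ 0.37 :=
  calc psi x ≤ x * exp (-x) * 1 := psi_le_mul_exp_neg_mul (by linarith) (g_exp_le_one h4)
    _ ≤ 1 * exp (-1) := by rw [mul_one]; exact mul_exp_neg_le_of_le le_rfl h1
    _ ≤ 0.37 := by rw [one_mul]; exact exp_neg_one_le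

lemma psi_le_of_four_le {x : ℝ} (h4 : 4 ≤ x) : psi x ≤ 10⁻¹ := by
  rcases lt_or_ge x 6 with h6 | h6
  · calc psi x ≤ x * exp (-x) * (77 / 60) :=
          psi_le_mul_exp_neg_mul (by linarith) (g_exp_le_of_lt_six (by linarith) h6)
      _ ≤ 4 * exp (-4) * (77 / 60) := by gcongr ?_ * _; exact mul_exp_neg_le_of_le (by norm_num) h4
      _ ≤ 10⁻¹ := by
          rw [exp_neg]
          linarith [(inv_lt_inv₀ (exp_pos 4) (by norm_num : (0:ℝ) < 54)).2 exp_four_gt]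
  · calc psi x ≤ x * exp (-x) * 2 := psi_le_mul_exp_neg_mul (by linarith) (g_exp_le_two (by linarith))
      _ ≤ 6 * exp (-6) * 2 := by gcongr ?_ * _; exact mul_exp_neg_le_of_le (by norm_num) h6
      _ ≤ 10⁻¹ := by
          rw [exp_neg]
          linarith [(inv_lt_inv₀ (exp_pos 6) (by norm_num : (0:ℝ) < 120)).2 exp_six_gt]

lemma psi_le_exp_neg_half {x : ℝ} (hx : 16 ≤ x) : psi x ≤ exp (-(x / 2)) :=
  calc psi x ≤ x * exp (-x) * 2 := psi_le_mul_exp_neg_mul (by linarith) (g_exp_le_two (by linarith))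
    _ = 2 * x * exp (-x) := by ring
    _ ≤ exp (-(x / 2)) := two_mul_mul_exp_neg_le hx

noncomputable def psiBound (j : ℕ) : ℝ := if j = 0 then 0.37 else 10⁻¹ ^ j

lemma psi_le_psiBound {j : ℕ} {x : ℝ} (hj : 4 ^ j ≤ x) (hx : x < 4 ^ (j + 1)) :
    psi x ≤ psiBound j := by
  match j with
  | 0 => simpa [psiBound] using psi_le_of_lt_four (by simpa using hj) (by simpa using hx)
  | 1 => simpa [psiBound] using psi_le_of_four_le (by simpa using hj)
  | j + 2 =>
    have h8 : (8 * (j + 2) : ℝ) ≤ x :=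
      le_trans (by exact_mod_cast eight_mul_le_four_pow (by omega : 2 ≤ j + 2)) hj
    calc psi x ≤ exp (-(x / 2)) := psi_le_exp_neg_half (by linarith)
      _ ≤ exp (-4) ^ (j + 2) := by
          rw [← exp_nat_mul, exp_le_exp]; push_cast; linarith
      _ ≤ 10⁻¹ ^ (j + 2) := by
          gcongr
          rw [exp_neg]
          exact inv_anti₀ (by norm_num) (by linarith [exp_four_gt])
      _ = psiBound (j + 2) := by simp [psiBound]

lemma sum_psiBound_le (n : ℕ) : ∑ j ∈ Finset.range n, psiBound j ≤ 0.37 + 9⁻¹ := by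
  cases n with
  | zero => norm_num
  | succ n =>
    rw [Finset.range_eq_Ico, Finset.sum_eq_sum_Ico_succ_bot (Nat.succ_pos n)]
    have htail : ∑ j ∈ Finset.Ico 1 (n + 1), psiBound j ≤ 9⁻¹ := by
      simp only [psiBound]
      rw [Finset.sum_congr rfl fun j hj => if_neg (by rw [Finset.mem_Ico] at hj; omega)]
      exact (geom_sum_Ico_le_of_lt_one (by norm_num) (by norm_num)).trans (by norm_num)
    rw [psiBound, if_pos rfl]
    linarith

/-- The arguments `L / r^(k+1)` that are at least `1` lie in distinct windows `[r^j, r^(j+1))`. -/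
lemma abs_tsum_le_of_window_bounds {r L B : ℝ} {ψ : ℝ → ℝ} {b a : ℕ → ℝ} (hr : 1 < r)
    (hL : 1 ≤ L) (hψ : ∀ x < 1, ψ x = 0) (hψb : ∀ j x, r ^ j ≤ x → x < r ^ (j + 1) → ψ x ≤ b j)
    (hB : ∀ n, ∑ j ∈ Finset.range n, b j ≤ B) (ha : ∀ k, |a k| ≤ ψ (L / r ^ (k + 1))) :
    |∑' k, a k| ≤ B := by
  obtain ⟨m, hmL, hLm⟩ := exists_nat_pow_near hL hr
  have hr₀ : 0 < r := zero_lt_one.trans hr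
  have hvanish : ∀ k ∉ Finset.range m, a k = 0 := fun k hk => by
    refine abs_nonpos_iff.1 ((ha k).trans_eq (hψ _ ?_))
    rw [div_lt_one (by positivity)]
    exact hLm.trans_le (pow_le_pow_right₀ hr.le (by simpa using hk))
  have hwindow : ∀ k ∈ Finset.range m, |a k| ≤ b (m - 1 - k) := fun k hk => by
    rw [Finset.mem_range] at hk
    refine (ha k).trans (hψb _ _ ?_ ?_)
    · rw [le_div_iff₀ (by positivity), ← pow_add]
      convert hmL using 2
      omega
    · rw [div_lt_iff₀ (by positivity), ← pow_add]
      convert hLm using 2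
      omega
  calc |∑' k, a k| = |∑ k ∈ Finset.range m, a k| := by rw [tsum_eq_sum hvanish]
    _ ≤ ∑ k ∈ Finset.range m, |a k| := Finset.abs_sum_le_sum_abs _ _
    _ ≤ ∑ k ∈ Finset.range m, b (m - 1 - k) := Finset.sum_le_sum hwindow
    _ = ∑ j ∈ Finset.range m, b j := Finset.sum_range_reflect b m
    _ ≤ B := hB m

lemma log_mul_fC_summand {v : ℝ} (hv : 0 < v) (s c : ℝ) :
    log v * (g (v ^ s⁻¹) / s * v ^ (-s⁻¹) * c) = psi (log v / s) * c := by
  simp only [psi, rpow_def_of_pos hv, div_eq_mul_inv, mul_neg]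
  ring

noncomputable def fCSeries (β v : ℝ) : ℝ :=
  ∑' k : ℕ, psi (log v / 4 ^ (k + 1)) * cos (γ β (k + 1) * log v)

lemma fC_eq {β v : ℝ} (hv : 1 < v) : fC β v = (1 - v⁻¹ - 2 * fCSeries β v) / log v := by
  have hsum : ∑' k : ℕ, g (v ^ (((4:ℝ) ^ (k + 1))⁻¹)) / (4:ℝ) ^ (k + 1) *
      v ^ (-((4:ℝ) ^ (k + 1))⁻¹) * cos (γ β (k + 1) * log v) = fCSeries β v / log v := by
    rw [fCSeries, ← tsum_div_const]
    congr 1 with k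
    rw [eq_div_iff (log_pos hv).ne', mul_comm, log_mul_fC_summand (zero_lt_one.trans hv)]
  rw [fC, hsum]
  ring

lemma abs_fCSeries_le (β : ℝ) {v : ℝ} (hv : 1 ≤ log v) : |fCSeries β v| ≤ 0.37 + 9⁻¹ :=
  abs_tsum_le_of_window_bounds (by norm_num) hv (fun _ => psi_eq_zero_of_lt_one)
    (fun _ _ => psi_le_psiBound) sum_psiBound_le fun k => by
      rw [abs_mul, abs_of_nonneg (psi_nonneg _)]
      exact mul_le_of_le_one_right (psi_nonneg _) (abs_cos_le_one _)

lemma fCSeries_eq_zero (β : ℝ) {v : ℝ} (hv : log v < 4) : fCSeries β v = 0 := by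
  refine (tsum_congr fun k => ?_).trans tsum_zero
  rw [psi_eq_zero_of_lt_one ((div_lt_one (by positivity)).2 ?_), zero_mul]
  exact hv.trans_le (le_self_pow₀ (by norm_num) k.succ_ne_zero)

theorem fC_Chebyshev_general (β : ℝ) :
    (∃ δ ∈ Set.Ioo (0:ℝ) 1, ∀ v : ℝ, Real.exp 4 ≤ v →
      (1 - δ) * ((1 - v⁻¹) / Real.log v) ≤ fC β v ∧
        fC β v ≤ (1 + δ) * ((1 - v⁻¹) / Real.log v)) ∧
    ∀ v : ℝ, 1 < v → 0 < fC β v := by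
  have bounds : ∀ v : ℝ, exp 4 ≤ v →
      (1 - 0.99) * ((1 - v⁻¹) / log v) ≤ fC β v ∧ fC β v ≤ (1 + 0.99) * ((1 - v⁻¹) / log v) := by
    intro v hv
    have hv54 : 54 < v := exp_four_gt.trans_le hv
    have hL : 4 ≤ log v := by rwa [le_log_iff_exp_le (by linarith)]
    have hS := abs_le.1 (abs_fCSeries_le β (by linarith : 1 ≤ log v))
    have hinv : v⁻¹ < 54⁻¹ := inv_strictAnti₀ (by norm_num) hv54
    rw [fC_eq (by linarith), ← mul_div_assoc, ← mul_div_assoc]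
    constructor <;> gcongr <;> linarith
  refine ⟨⟨0.99, by norm_num, bounds⟩, fun v hv => ?_⟩
  have hM : 0 < (1 - v⁻¹) / log v := div_pos (sub_pos.2 (inv_lt_one_of_one_lt₀ hv)) (log_pos hv)
  rcases le_or_gt (exp 4) v with h4 | h4
  · exact lt_of_lt_of_le (by positivity) (bounds v h4).1
  · rw [fC_eq hv, fCSeries_eq_zero β ((log_lt_iff_lt_exp (by linarith)).2 h4), mul_zero, sub_zero]
    exact hM

/-- Chebyshev bounds for `f_C`: there is `δ ∈ (0,1)` with
`(1-δ)(1-v⁻¹)/log v ≤ f_C(v) ≤ (1+δ)(1-v⁻¹)/log v` for `v ≥ e⁴`; and `f_C(v) > 0` for `v > 1`. -/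
theorem fC_Chebyshev (β : ℝ) (hβ : β ∈ Set.Ioo (0:ℝ) 1) :
    (∃ δ ∈ Set.Ioo (0:ℝ) 1, ∀ v : ℝ, Real.exp 4 ≤ v →
      (1 - δ) * ((1 - v⁻¹) / Real.log v) ≤ fC β v ∧
        fC β v ≤ (1 + δ) * ((1 - v⁻¹) / Real.log v)) ∧
    ∀ v : ℝ, 1 < v → 0 < fC β v :=
  fC_Chebyshev_general β
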